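/- (Proposition 2.9(ii), second part: the simple module L(φ).) Let 𝕂 be a field, r and s nonzero in 𝕂 with rs⁻¹ not a root of unity, φ a nonzero element of 𝕂, and m ≥ 0 an integer. Then the (m+1)-dimensional 𝕂-vector space with basis v_0, v_1, …, v_m carries a U_{r,s}(sl_2)-module structure given by ω.v_j = φ(rs⁻¹)⁻ʲ v_j, ω′.v_j = φ(rs⁻¹)^{−(m−j)} v_j, e.v_j = φ r^{−m}[m+1−j] v_{j−1} (with v_{−1} = 0), f.v_j = [j+1] v_{j+1} (with v_{m+1} = 0), and this module L(φ) is simple. -/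

import Mathlib

/-!
`L(φ)` is realised on `𝕂^{m+1}` with `ω`, `ω′` acting diagonally and `e`, `f` as weighted
shifts lowering and raising the index. Each defining relation of `U_{r,s}(sl_2)` becomes an
identity between the weights; for `ef − fe` it is
`[j+1][m−j] − [j][m+1−j] = (r^{m−j} s^j − r^j s^{m−j}) / (r − s)`.
Since `rs⁻¹` is not a root of unity, the weights `[k]`, `0 < k ≤ m`, do not vanish. Hence from
any nonzero vector, applying `e` as often as its highest nonzero coordinate allows gives a
nonzero multiple of `v_0`, and applying `f` to `v_0` produces every `v_j`.
-/

/-- Generators of `U_{r,s}(sl_2)`: `e`, `f`, `ω`, `ω⁻¹`, `ω′`, `ω′⁻¹`. -/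
inductive UGen : Type
  | e | f | w | winv | w' | w'inv

open FreeAlgebra in
/-- The defining relations of `U_{r,s}(sl_2)`. -/
inductive URel (𝕂 : Type) [Field 𝕂] (r s : 𝕂) :
    FreeAlgebra 𝕂 UGen → FreeAlgebra 𝕂 UGen → Prop
  | winv_right : URel 𝕂 r s (ι 𝕂 .w * ι 𝕂 .winv) 1
  | winv_left : URel 𝕂 r s (ι 𝕂 .winv * ι 𝕂 .w) 1
  | w'inv_right : URel 𝕂 r s (ι 𝕂 .w' * ι 𝕂 .w'inv) 1
  | w'inv_left : URel 𝕂 r s (ι 𝕂 .w'inv * ι 𝕂 .w') 1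
  | ww' : URel 𝕂 r s (ι 𝕂 .w * ι 𝕂 .w') (ι 𝕂 .w' * ι 𝕂 .w)
  | we : URel 𝕂 r s (ι 𝕂 .w * ι 𝕂 .e) ((r * s⁻¹) • (ι 𝕂 .e * ι 𝕂 .w))
  | wf : URel 𝕂 r s (ι 𝕂 .w * ι 𝕂 .f) ((r⁻¹ * s) • (ι 𝕂 .f * ι 𝕂 .w))
  | w'e : URel 𝕂 r s (ι 𝕂 .w' * ι 𝕂 .e) ((r⁻¹ * s) • (ι 𝕂 .e * ι 𝕂 .w'))
  | w'f : URel 𝕂 r s (ι 𝕂 .w' * ι 𝕂 .f) ((r * s⁻¹) • (ι 𝕂 .f * ι 𝕂 .w'))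
  | ef : URel 𝕂 r s (ι 𝕂 .e * ι 𝕂 .f - ι 𝕂 .f * ι 𝕂 .e)
      ((r - s)⁻¹ • (ι 𝕂 .w - ι 𝕂 .w'))

/-- The two-parameter quantum group `U_{r,s}(sl_2)`: the quotient of the free
algebra on the six generators by the defining relations. -/
abbrev Ursl2 (𝕂 : Type) [Field 𝕂] (r s : 𝕂) : Type := RingQuot (URel 𝕂 r s)

/-- The image of a generator in `U_{r,s}(sl_2)`. -/
def UGen.toU {𝕂 : Type} [Field 𝕂] (r s : 𝕂) (x : UGen) : Ursl2 𝕂 r s :=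
  RingQuot.mkAlgHom 𝕂 (URel 𝕂 r s) (FreeAlgebra.ι 𝕂 x)

/-- The quantum integer `[m] = (rᵐ − sᵐ)/(r − s)`. -/
def qInt {𝕂 : Type} [Field 𝕂] (r s : 𝕂) (m : ℕ) : 𝕂 := (r ^ m - s ^ m) / (r - s)

/-- The standard basis vectors `v_0, …, v_m` of the `(m+1)`-dimensional space
`Fin (m+1) → 𝕂`, extended by `v_j = 0` for `j > m` (so `v_{m+1} = 0`). -/
def stdv (𝕂 : Type) [Field 𝕂] (m : ℕ) (j : ℕ) : Fin (m + 1) → 𝕂 :=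
  if h : j < m + 1 then Pi.single (⟨j, h⟩ : Fin (m + 1)) 1 else 0

theorem isSimpleModule_compHom_of_invariant {𝕂 A V : Type*} [CommRing 𝕂] [Ring A]
    [Algebra 𝕂 A] [AddCommGroup V] [Module 𝕂 V] [Nontrivial V] (ρ : A →ₐ[𝕂] Module.End 𝕂 V)
    (h : ∀ N : Submodule 𝕂 V, N ≠ ⊥ → (∀ a, ∀ v ∈ N, ρ a v ∈ N) → N = ⊤) :
    letI := Module.compHom V ρ.toRingHom
    IsSimpleModule A V := by
  let := Module.compHom V ρ.toRingHom
  have : IsScalarTower 𝕂 A V := ⟨fun c a v => by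
    change ρ (c • a) v = c • ρ a v
    simp⟩
  have : Nontrivial (Submodule A V) := (Submodule.nontrivial_iff A).mpr inferInstance
  refine { eq_bot_or_eq_top := fun N => or_iff_not_imp_left.mpr fun hN => ?_ }
  rw [← Submodule.restrictScalars_eq_top_iff 𝕂]
  exact h _ (by rwa [Ne, Submodule.restrictScalars_eq_bot_iff]) fun a v hv => N.smul_mem a hv

theorem stdv_apply (𝕂 : Type) [Field 𝕂] (m j : ℕ) (i : Fin (m + 1)) :
    stdv 𝕂 m j i = if (i : ℕ) = j then 1 else 0 := by
  unfold stdv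
  split_ifs <;> simp_all [Pi.single_apply, Fin.ext_iff]
  omega

theorem stdv_val (𝕂 : Type) [Field 𝕂] {m : ℕ} (i : Fin (m + 1)) :
    stdv 𝕂 m i = Pi.single i 1 :=
  dif_pos i.isLt

theorem stdv_of_lt (𝕂 : Type) [Field 𝕂] {m j : ℕ} (hj : m < j) : stdv 𝕂 m j = 0 :=
  dif_neg (by omega)

theorem ext_stdv {𝕂 : Type} [Field 𝕂] {m : ℕ} {f g : Module.End 𝕂 (Fin (m + 1) → 𝕂)}
    (h : ∀ j ≤ m, f (stdv 𝕂 m j) = g (stdv 𝕂 m j)) : f = g :=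
  (Pi.basisFun 𝕂 (Fin (m + 1))).ext fun i => by
    simpa [stdv_val] using h i (Fin.is_le i)

theorem eq_top_of_stdv_mem {𝕂 : Type} [Field 𝕂] {m : ℕ} {N : Submodule 𝕂 (Fin (m + 1) → 𝕂)}
    (h : ∀ j ≤ m, stdv 𝕂 m j ∈ N) : N = ⊤ := by
  rw [eq_top_iff, ← (Pi.basisFun 𝕂 (Fin (m + 1))).span_eq, Submodule.span_le]
  rintro _ ⟨i, rfl⟩
  simpa [stdv_val] using h i (Fin.is_le i)

section WeightedShift

variable {𝕂 : Type} [Field 𝕂] (m : ℕ)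

def diagOp (d : ℕ → 𝕂) : Module.End 𝕂 (Fin (m + 1) → 𝕂) where
  toFun v i := d i * v i
  map_add' _ _ := by ext; simp [mul_add]
  map_smul' _ _ := by ext; simp [mul_left_comm]

def lowerOp (a : ℕ → 𝕂) : Module.End 𝕂 (Fin (m + 1) → 𝕂) where
  toFun v i := if h : (i : ℕ) < m then a i * v ⟨i + 1, by omega⟩ else 0
  map_add' _ _ := by ext; simp only [Pi.add_apply]; split_ifs <;> ring
  map_smul' _ _ := by
    ext
    simp only [Pi.smul_apply, smul_eq_mul, RingHom.id_apply]
    split_ifs <;> ring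

def raiseOp (c : ℕ → 𝕂) : Module.End 𝕂 (Fin (m + 1) → 𝕂) where
  toFun v i := if h : (i : ℕ) = 0 then 0 else c i * v ⟨i - 1, by omega⟩
  map_add' _ _ := by ext; simp only [Pi.add_apply]; split_ifs <;> ring
  map_smul' _ _ := by
    ext
    simp only [Pi.smul_apply, smul_eq_mul, RingHom.id_apply]
    split_ifs <;> ring

variable {m}

theorem diagOp_apply (d : ℕ → 𝕂) (v : Fin (m + 1) → 𝕂) (i : Fin (m + 1)) :
    diagOp m d v i = d i * v i := rfl

theorem lowerOp_apply (a : ℕ → 𝕂) (v : Fin (m + 1) → 𝕂) (i : Fin (m + 1)) :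
    lowerOp m a v i = if h : (i : ℕ) < m then a i * v ⟨i + 1, by omega⟩ else 0 := rfl

theorem raiseOp_apply (c : ℕ → 𝕂) (v : Fin (m + 1) → 𝕂) (i : Fin (m + 1)) :
    raiseOp m c v i = if h : (i : ℕ) = 0 then 0 else c i * v ⟨i - 1, by omega⟩ := rfl

theorem diagOp_stdv (d : ℕ → 𝕂) (j : ℕ) : diagOp m d (stdv 𝕂 m j) = d j • stdv 𝕂 m j := by
  ext i
  simp only [diagOp_apply, stdv_apply, Pi.smul_apply, smul_eq_mul]
  split_ifs with h <;> simp [h]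

theorem lowerOp_stdv_zero (a : ℕ → 𝕂) : lowerOp m a (stdv 𝕂 m 0) = 0 := by
  ext i
  simp [lowerOp_apply, stdv_apply]

theorem lowerOp_stdv_succ (a : ℕ → 𝕂) {j : ℕ} (hj : j < m) :
    lowerOp m a (stdv 𝕂 m (j + 1)) = a j • stdv 𝕂 m j := by
  ext i
  simp only [lowerOp_apply, stdv_apply, Pi.smul_apply, smul_eq_mul, add_left_inj]
  split_ifs <;> simp_all

theorem raiseOp_stdv (c : ℕ → 𝕂) (j : ℕ) :
    raiseOp m c (stdv 𝕂 m j) = c (j + 1) • stdv 𝕂 m (j + 1) := by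
  ext i
  simp only [raiseOp_apply, stdv_apply, Pi.smul_apply, smul_eq_mul]
  split_ifs <;> first | (exfalso; omega) | simp [*]

theorem diagOp_mul (d d' : ℕ → 𝕂) : diagOp m d * diagOp m d' = diagOp m (d * d') := by
  ext v i
  simp [diagOp_apply, mul_assoc]

theorem diagOp_one : diagOp m (1 : ℕ → 𝕂) = 1 := by
  ext v i
  simp [diagOp_apply]

theorem diagOp_sub (d d' : ℕ → 𝕂) : diagOp m (d - d') = diagOp m d - diagOp m d' := by
  ext v i
  simp [diagOp_apply, sub_mul]

theorem diagOp_smul (c : 𝕂) (d : ℕ → 𝕂) : diagOp m (c • d) = c • diagOp m d := by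
  ext v i
  simp [diagOp_apply, mul_assoc]

theorem diagOp_mul_inv {d : ℕ → 𝕂} (hd : ∀ j, d j ≠ 0) : diagOp m d * diagOp m d⁻¹ = 1 := by
  rw [diagOp_mul, ← diagOp_one]
  exact congrArg _ (funext fun j => mul_inv_cancel₀ (hd j))

theorem diagOp_inv_mul {d : ℕ → 𝕂} (hd : ∀ j, d j ≠ 0) : diagOp m d⁻¹ * diagOp m d = 1 := by
  rw [diagOp_mul, ← diagOp_one]
  exact congrArg _ (funext fun j => inv_mul_cancel₀ (hd j))

theorem diagOp_mul_lowerOp (d a : ℕ → 𝕂) (q : 𝕂) (h : ∀ j, d j = q * d (j + 1)) :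
    diagOp m d * lowerOp m a = q • (lowerOp m a * diagOp m d) := by
  refine ext_stdv fun j hj => ?_
  rcases j with _ | j
  · simp [diagOp_stdv, lowerOp_stdv_zero]
  · simp only [Module.End.mul_apply, LinearMap.smul_apply, diagOp_stdv, map_smul,
      lowerOp_stdv_succ a (Nat.succ_le_iff.mp hj), smul_smul, h j]
    ring_nf

theorem diagOp_mul_raiseOp (d c : ℕ → 𝕂) (q : 𝕂) (h : ∀ j, d (j + 1) = q * d j) :
    diagOp m d * raiseOp m c = q • (raiseOp m c * diagOp m d) := by
  refine ext_stdv fun j _ => ?_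
  simp only [Module.End.mul_apply, LinearMap.smul_apply, diagOp_stdv, map_smul, raiseOp_stdv,
    smul_smul, h j]
  ring_nf

theorem lowerOp_mul_raiseOp_sub (a c b : ℕ → 𝕂) (ha : a m = 0) (h0 : c 1 * a 0 = b 0)
    (hsucc : ∀ j < m, c (j + 2) * a (j + 1) - c (j + 1) * a j = b (j + 1)) :
    lowerOp m a * raiseOp m c - raiseOp m c * lowerOp m a = diagOp m b := by
  have hlr : ∀ j ≤ m, lowerOp m a (raiseOp m c (stdv 𝕂 m j)) = (c (j + 1) * a j) • stdv 𝕂 m j := by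
    intro j hj
    rcases hj.lt_or_eq with hj | rfl
    · rw [raiseOp_stdv, map_smul, lowerOp_stdv_succ a hj, smul_smul]
    · rw [raiseOp_stdv, stdv_of_lt 𝕂 (by omega), smul_zero, map_zero, ha, mul_zero, zero_smul]
  refine ext_stdv fun j hj => ?_
  rw [LinearMap.sub_apply, Module.End.mul_apply, Module.End.mul_apply, hlr j hj, diagOp_stdv]
  rcases j with _ | j
  · rw [lowerOp_stdv_zero, map_zero, sub_zero, h0]
  · rw [lowerOp_stdv_succ a (Nat.succ_le_iff.mp hj), map_smul, raiseOp_stdv, smul_smul, ← sub_smul,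
      ← hsucc j (Nat.succ_le_iff.mp hj)]
    ring_nf

theorem stdv_zero_mem_of_lowerOp_mem {a : ℕ → 𝕂} (ha : ∀ j < m, a j ≠ 0)
    {N : Submodule 𝕂 (Fin (m + 1) → 𝕂)} (hN : ∀ v ∈ N, lowerOp m a v ∈ N)
    {v : Fin (m + 1) → 𝕂} (hv : v ∈ N) (hv0 : v ≠ 0) : stdv 𝕂 m 0 ∈ N := by
  suffices ∀ n, ∀ v ∈ N, v ≠ 0 → (∀ i : Fin (m + 1), n < (i : ℕ) → v i = 0) →
      stdv 𝕂 m 0 ∈ N from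
    this m v hv hv0 fun i hi => absurd i.is_le (by omega)
  intro n
  induction n with
  | zero =>
    intro v hv hv0 hsupp
    have hv_eq : v = v 0 • stdv 𝕂 m 0 := by
      ext i
      rw [Pi.smul_apply, stdv_apply]
      split_ifs with hi
      · simp [show i = 0 from Fin.ext hi]
      · simp [hsupp i (by omega)]
    rw [hv_eq] at hv hv0
    exact (N.smul_mem_iff (left_ne_zero_of_smul hv0)).mp hv
  | succ n ih =>
    intro v hv hv0 hsupp
    by_cases hvn : ∀ i : Fin (m + 1), n < (i : ℕ) → v i = 0
    · exact ih v hv hv0 hvn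
    push Not at hvn
    obtain ⟨i, hni, hvi⟩ := hvn
    have hi : (i : ℕ) = n + 1 := by
      by_contra
      exact hvi (hsupp i (by omega))
    have hnm : n < m := by
      have := i.isLt
      omega
    obtain rfl : i = ⟨n + 1, Nat.succ_lt_succ hnm⟩ := Fin.ext hi
    refine ih _ (hN v hv) (fun h => ?_) fun k hk => ?_
    · have := congrFun h ⟨n, by omega⟩
      rw [lowerOp_apply, dif_pos hnm] at this
      exact mul_ne_zero (ha n hnm) hvi this
    · rw [lowerOp_apply]
      split_ifs
      · rw [hsupp _ (by simp only; omega), mul_zero]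
      · rfl

theorem stdv_mem_of_raiseOp_mem {c : ℕ → 𝕂} (hc : ∀ j < m, c (j + 1) ≠ 0)
    {N : Submodule 𝕂 (Fin (m + 1) → 𝕂)} (hN : ∀ v ∈ N, raiseOp m c v ∈ N)
    (h0 : stdv 𝕂 m 0 ∈ N) : ∀ j ≤ m, stdv 𝕂 m j ∈ N
  | 0, _ => h0
  | j + 1, hj => by
    have := hN _ (stdv_mem_of_raiseOp_mem hc hN h0 j (by omega))
    rwa [raiseOp_stdv, N.smul_mem_iff (hc j (by omega))] at this

theorem eq_top_of_lowerOp_raiseOp_mem {a c : ℕ → 𝕂} (ha : ∀ j < m, a j ≠ 0)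
    (hc : ∀ j < m, c (j + 1) ≠ 0) {N : Submodule 𝕂 (Fin (m + 1) → 𝕂)}
    (hNa : ∀ v ∈ N, lowerOp m a v ∈ N) (hNc : ∀ v ∈ N, raiseOp m c v ∈ N) (hN : N ≠ ⊥) :
    N = ⊤ := by
  obtain ⟨v, hv, hv0⟩ := N.ne_bot_iff.mp hN
  exact eq_top_of_stdv_mem <|
    stdv_mem_of_raiseOp_mem hc hNc (stdv_zero_mem_of_lowerOp_mem ha hNa hv hv0)

end WeightedShift

section QInt

variable {𝕂 : Type} [Field 𝕂] {r s : 𝕂}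

@[simp]
theorem qInt_zero : qInt r s 0 = 0 := by
  simp [qInt]

theorem ne_of_forall_zpow_eq_one (hs : s ≠ 0) (hroot : ∀ k : ℤ, (r * s⁻¹) ^ k = 1 → k = 0) :
    r ≠ s := by
  rintro rfl
  exact one_ne_zero (hroot 1 (by rw [zpow_one, mul_inv_cancel₀ hs]))

theorem qInt_ne_zero (hs : s ≠ 0) (hroot : ∀ k : ℤ, (r * s⁻¹) ^ k = 1 → k = 0) {k : ℕ}
    (hk : k ≠ 0) : qInt r s k ≠ 0 := by
  have hrs := sub_ne_zero.mpr (ne_of_forall_zpow_eq_one hs hroot)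
  refine div_ne_zero (fun h => hk ?_) hrs
  exact_mod_cast hroot k (by rw [zpow_natCast, mul_pow, inv_pow, sub_eq_zero.mp h,
    mul_inv_cancel₀ (pow_ne_zero k hs)])

theorem qInt_succ_mul_qInt_sub (hrs : r ≠ s) (a b : ℕ) :
    qInt r s (a + 1) * qInt r s b - qInt r s a * qInt r s (b + 1) =
      (r ^ b * s ^ a - r ^ a * s ^ b) / (r - s) := by
  have := sub_ne_zero.mpr hrs
  simp only [qInt]
  field_simp
  ring

end QInt

namespace Ursl2

variable {𝕂 : Type} [Field 𝕂] (r s φ : 𝕂) (m : ℕ)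

def wWeight (j : ℕ) : 𝕂 := φ * (r * s⁻¹) ^ (-(j : ℤ))

def w'Weight (j : ℕ) : 𝕂 := φ * (r * s⁻¹) ^ (-((m : ℤ) - j))

def eWeight (j : ℕ) : 𝕂 := φ * r ^ (-(m : ℤ)) * qInt r s (m - j)

variable {r s φ m}

theorem wWeight_eq_mul_succ (hq : r * s⁻¹ ≠ 0) (j : ℕ) :
    wWeight r s φ j = r * s⁻¹ * wWeight r s φ (j + 1) := by
  rw [wWeight, wWeight, mul_left_comm, ← zpow_one_add₀ hq]
  push_cast
  ring_nf

theorem wWeight_succ (hq : r * s⁻¹ ≠ 0) (j : ℕ) :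
    wWeight r s φ (j + 1) = r⁻¹ * s * wWeight r s φ j := by
  rw [wWeight_eq_mul_succ hq j, ← mul_assoc, ← inv_inv s, ← mul_inv, inv_inv, inv_mul_cancel₀ hq,
    one_mul]

theorem w'Weight_succ (hq : r * s⁻¹ ≠ 0) (j : ℕ) :
    w'Weight r s φ m (j + 1) = r * s⁻¹ * w'Weight r s φ m j := by
  rw [w'Weight, w'Weight, mul_left_comm, ← zpow_one_add₀ hq]
  push_cast
  ring_nf

theorem w'Weight_eq_mul_succ (hq : r * s⁻¹ ≠ 0) (j : ℕ) :
    w'Weight r s φ m j = r⁻¹ * s * w'Weight r s φ m (j + 1) := by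
  rw [w'Weight_succ hq j, ← mul_assoc, ← inv_inv s, ← mul_inv, inv_inv, inv_mul_cancel₀ hq,
    one_mul]

theorem wWeight_ne_zero (hq : r * s⁻¹ ≠ 0) (hφ : φ ≠ 0) (j : ℕ) : wWeight r s φ j ≠ 0 :=
  mul_ne_zero hφ (zpow_ne_zero _ hq)

theorem w'Weight_ne_zero (hq : r * s⁻¹ ≠ 0) (hφ : φ ≠ 0) (j : ℕ) : w'Weight r s φ m j ≠ 0 :=
  mul_ne_zero hφ (zpow_ne_zero _ hq)

theorem eWeight_self : eWeight r s φ m m = 0 := by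
  simp [eWeight]

theorem eWeight_ne_zero (hr : r ≠ 0) (hs : s ≠ 0) (hφ : φ ≠ 0)
    (hroot : ∀ k : ℤ, (r * s⁻¹) ^ k = 1 → k = 0) {j : ℕ} (hj : j < m) : eWeight r s φ m j ≠ 0 :=
  mul_ne_zero (mul_ne_zero hφ (zpow_ne_zero _ hr)) (qInt_ne_zero hs hroot (by omega))

theorem qInt_mul_eWeight_sub {a b : ℕ} (hab : a + b = m) (hr : r ≠ 0) (hrs : r ≠ s) :
    qInt r s (a + 1) * (φ * r ^ (-(m : ℤ)) * qInt r s b)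
        - qInt r s a * (φ * r ^ (-(m : ℤ)) * qInt r s (b + 1)) =
      (r - s)⁻¹ * (wWeight r s φ a - w'Weight r s φ m a) := by
  have hb : -((m : ℤ) - a) = -(b : ℤ) := by omega
  have hrs' := sub_ne_zero.mpr hrs
  calc _ = φ * r ^ (-(m : ℤ)) *
        (qInt r s (a + 1) * qInt r s b - qInt r s a * qInt r s (b + 1)) := by ring
    _ = _ := by
      rw [qInt_succ_mul_qInt_sub hrs, wWeight, w'Weight, hb, ← hab]
      simp only [zpow_neg, zpow_natCast, mul_pow, inv_pow, mul_inv, inv_inv, pow_add]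
      field_simp

variable (r s φ m)

def genAction : UGen → Module.End 𝕂 (Fin (m + 1) → 𝕂)
  | .e => lowerOp m (eWeight r s φ m)
  | .f => raiseOp m (qInt r s)
  | .w => diagOp m (wWeight r s φ)
  | .winv => diagOp m (wWeight r s φ)⁻¹
  | .w' => diagOp m (w'Weight r s φ m)
  | .w'inv => diagOp m (w'Weight r s φ m)⁻¹

variable {r s φ m}

theorem lift_genAction_eq_of_rel (hr : r ≠ 0) (hs : s ≠ 0) (hφ : φ ≠ 0) (hrs : r ≠ s)
    {x y : FreeAlgebra 𝕂 UGen} (h : URel 𝕂 r s x y) :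
    FreeAlgebra.lift 𝕂 (genAction r s φ m) x = FreeAlgebra.lift 𝕂 (genAction r s φ m) y := by
  have hq : r * s⁻¹ ≠ 0 := mul_ne_zero hr (inv_ne_zero hs)
  cases h <;> simp only [map_mul, map_one, map_smul, map_sub, FreeAlgebra.lift_ι_apply, genAction]
  · exact diagOp_mul_inv (wWeight_ne_zero hq hφ)
  · exact diagOp_inv_mul (wWeight_ne_zero hq hφ)
  · exact diagOp_mul_inv (w'Weight_ne_zero hq hφ)
  · exact diagOp_inv_mul (w'Weight_ne_zero hq hφ)
  · rw [diagOp_mul, diagOp_mul, mul_comm]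
  · exact diagOp_mul_lowerOp _ _ _ (wWeight_eq_mul_succ hq)
  · exact diagOp_mul_raiseOp _ _ _ (wWeight_succ hq)
  · exact diagOp_mul_lowerOp _ _ _ (w'Weight_eq_mul_succ hq)
  · exact diagOp_mul_raiseOp _ _ _ (w'Weight_succ hq)
  · rw [← diagOp_sub, ← diagOp_smul]
    refine lowerOp_mul_raiseOp_sub _ _ _ eWeight_self ?_ fun j hj => ?_
    · simpa [eWeight] using qInt_mul_eWeight_sub (φ := φ) (zero_add m) hr hrs
    · have := qInt_mul_eWeight_sub (φ := φ) (a := j + 1) (b := m - (j + 1))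
        (Nat.add_sub_of_le hj) hr hrs
      rwa [show m - (j + 1) + 1 = m - j by omega] at this

variable (r s φ m) in
def repL (hr : r ≠ 0) (hs : s ≠ 0) (hφ : φ ≠ 0) (hrs : r ≠ s) :
    Ursl2 𝕂 r s →ₐ[𝕂] Module.End 𝕂 (Fin (m + 1) → 𝕂) :=
  RingQuot.liftAlgHom 𝕂 ⟨FreeAlgebra.lift 𝕂 (genAction r s φ m),
    fun _ _ => lift_genAction_eq_of_rel hr hs hφ hrs⟩

@[simp]
theorem repL_toU (hr : r ≠ 0) (hs : s ≠ 0) (hφ : φ ≠ 0) (hrs : r ≠ s) (x : UGen) :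
    repL r s φ m hr hs hφ hrs (UGen.toU r s x) = genAction r s φ m x := by
  rw [repL, UGen.toU, RingQuot.liftAlgHom_mkAlgHom_apply, FreeAlgebra.lift_ι_apply]

end Ursl2

/-- Proposition 2.9(ii), second part: the `(m+1)`-dimensional `𝕂`-vector space with
basis `v_0, …, v_m` carries a `U_{r,s}(sl_2)`-module structure with
`ω.v_j = φ(rs⁻¹)⁻ʲ v_j`, `ω′.v_j = φ(rs⁻¹)^{−(m−j)} v_j`,
`e.v_j = φ r^{−m}[m+1−j] v_{j−1}` (`v_{−1} = 0`), `f.v_j = [j+1] v_{j+1}`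
(`v_{m+1} = 0`), and this module `L(φ)` is simple. -/
theorem stmt12 {𝕂 : Type} [Field 𝕂] (r s : 𝕂) (hr : r ≠ 0) (hs : s ≠ 0)
    (hroot : ∀ k : ℤ, (r * s⁻¹) ^ k = 1 → k = 0)
    (φ : 𝕂) (hφ : φ ≠ 0) (m : ℕ) :
    ∃ ρ : Ursl2 𝕂 r s →ₐ[𝕂] Module.End 𝕂 (Fin (m + 1) → 𝕂),
      (∀ j : ℕ, j ≤ m → ρ (UGen.toU r s .w) (stdv 𝕂 m j) =
        (φ * (r * s⁻¹) ^ (-(j : ℤ))) • stdv 𝕂 m j) ∧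
      (∀ j : ℕ, j ≤ m → ρ (UGen.toU r s .w') (stdv 𝕂 m j) =
        (φ * (r * s⁻¹) ^ (-((m : ℤ) - (j : ℤ)))) • stdv 𝕂 m j) ∧
      (ρ (UGen.toU r s .e) (stdv 𝕂 m 0) = 0) ∧
      (∀ j : ℕ, j + 1 ≤ m → ρ (UGen.toU r s .e) (stdv 𝕂 m (j + 1)) =
        (φ * r ^ (-(m : ℤ)) * qInt r s (m - j)) • stdv 𝕂 m j) ∧
      (∀ j : ℕ, j ≤ m → ρ (UGen.toU r s .f) (stdv 𝕂 m j) =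
        qInt r s (j + 1) • stdv 𝕂 m (j + 1)) ∧
      (letI : Module (Ursl2 𝕂 r s) (Fin (m + 1) → 𝕂) :=
        Module.compHom (Fin (m + 1) → 𝕂) ρ.toRingHom
       IsSimpleModule (Ursl2 𝕂 r s) (Fin (m + 1) → 𝕂)) := by
  have hrs := ne_of_forall_zpow_eq_one hs hroot
  refine ⟨Ursl2.repL r s φ m hr hs hφ hrs, fun j _ => ?_, fun j _ => ?_, ?_, fun j hj => ?_,
    fun j _ => ?_, ?_⟩
  · simp [Ursl2.genAction, diagOp_stdv, Ursl2.wWeight]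
  · simp [Ursl2.genAction, diagOp_stdv, Ursl2.w'Weight]
  · simp [Ursl2.genAction, lowerOp_stdv_zero]
  · simp [Ursl2.genAction, lowerOp_stdv_succ _ hj, Ursl2.eWeight]
  · simp [Ursl2.genAction, raiseOp_stdv]
  · refine isSimpleModule_compHom_of_invariant _ fun N hN hinv =>
      eq_top_of_lowerOp_raiseOp_mem (fun j => Ursl2.eWeight_ne_zero hr hs hφ hroot)
        (fun j _ => qInt_ne_zero hs hroot j.succ_ne_zero) (fun v hv => ?_) (fun v hv => ?_) hN
    · simpa [Ursl2.genAction] using hinv (UGen.toU r s .e) v hv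
    · simpa [Ursl2.genAction] using hinv (UGen.toU r s .f) v hv
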